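/- arXiv:1406.1709 — 3 statements merged into one kernel-verified Lean document; each statement's English description precedes it below -/
import Mathlib

section
/- Let n, i, j be integers with i ≥ j ≥ 0, i + j ≤ n and i + j ≡ n (mod 2), and let δ_i be the remainder of i modulo 2. Then the number of pairs (P,Q) of lattice paths of length n satisfying Q ≤ P, P ≥ 0, Q ≥ 0 and i − j ≤ h(Q) ≤ i + j ≤ h(P) equals the number of pairs (P,Q) of lattice paths of length n satisfying Q ≤ P, h(P) = j + δ_i, h(Q) = −j + δ_i, and min over 0 ≤ a ≤ n of (h_a(P) + h_a(Q))/2 equal to −⌊i/2⌋. -/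
/-- A lattice path of length `n`: each step is `+1` (U) or `-1` (D). -/
def IsPath {n : ℕ} (P : Fin n → ℤ) : Prop := ∀ l, P l = 1 ∨ P l = -1

/-- Height of the path `P` at `x = a`: sum of the first `a` steps. -/
def ht {n : ℕ} (P : Fin n → ℤ) (a : ℕ) : ℤ :=
  ∑ l ∈ Finset.univ.filter (fun l : Fin n => (l : ℕ) < a), P l

/-- The lowest height of the agreement path `(P+Q)/2`, over `0 ≤ a ≤ n`. -/
def agreeMin {n : ℕ} (P Q : Fin n → ℤ) : ℤ :=
  (Finset.range (n + 1)).inf' Finset.nonempty_range_add_one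
    (fun a => (ht P a + ht Q a) / 2)

/-!
Everything is expressed through the numbers `f x` of unrestricted paths of length `n` ending at
height `x`. By the reflection principle, paths staying above `-w` with end `≥ x` number
`f x + f (x + 2) + ⋯ + f (x + 2w)`. On the left-hand side, `Q ≤ P` with `Q ≥ 0` is handled by the
Lindström–Gessel–Viennot involution (swap the tails of `P` and `Q` at the first time `Q` is two
above `P`), which turns the count into products of such one-path numbers. On the right-hand side,
with `μ = ⌊i/2⌋`, reflecting the pair, exchanged, through the line `P + Q = -2μ` after its first
visit and then negating and exchanging both paths matches the pairs with `min (P + Q)/2 ≤ -μ` with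
all noncrossing pairs whose ends are raised by `2μ`; the count with minimum exactly `-μ` is the
difference of this for `μ` and `μ + 1`, and LGV evaluates both terms. With `t = i + j` and
`b = i - j`, both sides equal `f t f b + f (t + 4) f b - f (t + 2) f (b - 2) - f (t + 2) f (b + 2)`.
-/

open MeasureTheory Set

theorem Function.Involutive.card_subtype_eq {α : Type*} {f : α → α} (hf : Function.Involutive f)
    {p q : α → Prop} (hpq : ∀ x, p x → q (f x)) (hqp : ∀ x, q x → p (f x)) :
    Nat.card {x // p x} = Nat.card {x // q x} :=
  Nat.card_congr <| (hf.toPerm f).subtypeEquiv fun x =>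
    ⟨hpq x, fun h => by simpa only [Function.Involutive.coe_toPerm, hf x] using hqp _ h⟩

theorem card_subtype_eq_add {α : Type*} {r p q : α → Prop} [Finite {x // r x}]
    (hr : ∀ x, r x ↔ p x ∨ q x) (hpq : ∀ x, p x → ¬ q x) :
    Nat.card {x // r x} = Nat.card {x // p x} + Nat.card {x // q x} := by
  classical
  have : Finite {x // p x} :=
    Finite.of_injective _ (Subtype.impEmbedding _ _ fun x hx => (hr x).2 (.inl hx)).injective
  have : Finite {x // q x} :=
    Finite.of_injective _ (Subtype.impEmbedding _ _ fun x hx => (hr x).2 (.inr hx)).injective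
  rw [Nat.card_congr (Equiv.subtypeEquivRight hr),
    Nat.card_congr (subtypeOrEquiv p q fun _ hp hq x hx => hpq x (hp x hx) (hq x hx)),
    Nat.card_sum]

section Heights

variable {n : ℕ} {P : Fin n → ℤ} {a : ℕ}

theorem ht_zero (P : Fin n → ℤ) : ht P 0 = 0 := by simp [ht]

theorem ht_succ (P : Fin n → ℤ) (h : a < n) : ht P (a + 1) = ht P a + P ⟨a, h⟩ := by
  have : Finset.univ.filter (fun l : Fin n => (l : ℕ) < a + 1)
      = insert ⟨a, h⟩ (Finset.univ.filter fun l : Fin n => (l : ℕ) < a) := by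
    ext l
    simp only [Finset.mem_filter, Finset.mem_univ, true_and, Finset.mem_insert, Fin.ext_iff]
    omega
  rw [ht, this, Finset.sum_insert (by simp), add_comm, ht]

theorem ht_neg (P : Fin n → ℤ) (a : ℕ) : ht (-P) a = -ht P a := by
  simp [ht, Finset.sum_neg_distrib]

theorem IsPath.neg (hP : IsPath P) : IsPath (-P) := fun l => by
  rcases hP l with h | h <;> simp [h]

theorem IsPath.ht_succ_eq (hP : IsPath P) (h : a < n) :
    ht P (a + 1) = ht P a + 1 ∨ ht P (a + 1) = ht P a - 1 := by
  rw [ht_succ P h]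
  rcases hP ⟨a, h⟩ with h' | h' <;> rw [h'] <;> omega

theorem IsPath.abs_ht_le (hP : IsPath P) (ha : a ≤ n) : |ht P a| ≤ a := by
  induction a with
  | zero => simp [ht_zero]
  | succ a ih =>
    have := abs_le.mp (ih (by omega))
    rw [abs_le]
    rcases hP.ht_succ_eq ha with h | h <;> rw [h] <;> push_cast <;> omega

theorem IsPath.ht_add_emod_two (hP : IsPath P) (ha : a ≤ n) : (ht P a + a) % 2 = 0 := by
  induction a with
  | zero => simp [ht_zero]
  | succ a ih =>
    have := ih (by omega)
    rcases hP.ht_succ_eq ha with h | h <;> rw [h] <;> push_cast <;> omega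

theorem finite_setOf_isPath : {P : Fin n → ℤ | IsPath P}.Finite :=
  (Set.Finite.pi (t := fun _ => ({1, -1} : Set ℤ)) fun _ => toFinite _).subset
    fun _ hP l _ => hP l

theorem finite_of_isPath {p : (Fin n → ℤ) → Prop} (h : ∀ P, p P → IsPath P) :
    Finite {P // p P} :=
  (finite_setOf_isPath.subset h).to_subtype

theorem finite_of_isPath_pair {p : (Fin n → ℤ) × (Fin n → ℤ) → Prop}
    (h : ∀ x, p x → IsPath x.1 ∧ IsPath x.2) : Finite {x // p x} :=
  ((finite_setOf_isPath.prod finite_setOf_isPath).subset h).to_subtype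

end Heights

section Splice

variable {n : ℕ} {t a : ℕ} {A B C : Fin n → ℤ}

def splice (t : ℕ) (A B : Fin n → ℤ) : Fin n → ℤ := fun l => if (l : ℕ) < t then A l else B l

theorem IsPath.splice (hA : IsPath A) (hB : IsPath B) (t : ℕ) : IsPath (splice t A B) := by
  intro l
  unfold _root_.splice
  split_ifs
  exacts [hA l, hB l]

theorem splice_self : splice t A A = A := by
  funext l
  simp [splice]

theorem splice_splice_left : splice t (splice t A B) C = splice t A C := by
  funext l
  simp only [splice]
  split_ifs <;> rfl

theorem splice_splice_right : splice t A (splice t B C) = splice t A C := by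
  funext l
  simp only [splice]
  split_ifs <;> rfl

theorem neg_splice : -splice t A B = splice t (-A) (-B) := by
  funext l
  simp only [splice, Pi.neg_apply]
  split_ifs <;> rfl

theorem ht_splice_of_le (A B : Fin n → ℤ) (h : a ≤ t) : ht (splice t A B) a = ht A a := by
  unfold ht
  refine Finset.sum_congr rfl fun l hl => ?_
  simp only [Finset.mem_filter] at hl
  simp [splice, show (l : ℕ) < t by omega]

theorem ht_splice_of_ge (A B : Fin n → ℤ) (h : t ≤ a) (han : a ≤ n) :
    ht (splice t A B) a = ht A t + (ht B a - ht B t) := by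
  induction a, h using Nat.le_induction with
  | base => rw [ht_splice_of_le A B le_rfl]; ring
  | succ a ha ih =>
    rw [ht_succ _ han, ht_succ B han, ih (by omega)]
    simp only [splice, show ¬a < t by omega, if_false]
    ring

end Splice

/-- Defaults to `n` when `g` never reaches `m`; splicing at time `n` changes nothing, so this is
harmless. -/
noncomputable def firstPassage (n : ℕ) (m : ℤ) (g : ℕ → ℤ) : ℕ :=
  hittingBtwn (fun a (g : ℕ → ℤ) => g a) (Iic m) 0 n g

section FirstPassage

variable {n a : ℕ} {m : ℤ} {g g' : ℕ → ℤ}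

theorem firstPassage_le : firstPassage n m g ≤ n := hittingBtwn_le _

theorem apply_firstPassage_le (h : ∃ a ≤ n, g a ≤ m) : g (firstPassage n m g) ≤ m := by
  obtain ⟨a, ha, hga⟩ := h
  exact hittingBtwn_mem_set (u := fun a (g : ℕ → ℤ) => g a) (s := Iic m) ⟨a, ⟨a.zero_le, ha⟩, hga⟩

theorem lt_apply_of_lt_firstPassage (ha : a < firstPassage n m g) : m < g a :=
  not_le.mp (notMem_of_lt_hittingBtwn (u := fun a (g : ℕ → ℤ) => g a) (s := Iic m) ha a.zero_le)

theorem exists_le_of_lt_firstPassage {b : ℕ} (hb : b ≤ n) (h : firstPassage n m g < b) :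
    ∃ a < b, g a ≤ m := by
  obtain ⟨a, ha, hga⟩ :=
    (hittingBtwn_lt_iff (u := fun a (g : ℕ → ℤ) => g a) (s := Iic m) b hb).1 h
  exact ⟨a, ha.2, hga⟩

theorem firstPassage_congr (h : ∀ a ≤ firstPassage n m g, g' a = g a) :
    firstPassage n m g' = firstPassage n m g := by
  apply le_antisymm
  · by_contra! hlt
    obtain ⟨a, ha, hga⟩ := exists_le_of_lt_firstPassage firstPassage_le hlt
    have hτ' : firstPassage n m g' ≤ n := firstPassage_le
    have hhit : g' (firstPassage n m g) ≤ m := by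
      rw [h _ le_rfl]
      exact apply_firstPassage_le ⟨a, by omega, hga⟩
    exact hlt.not_ge (hittingBtwn_le_of_mem (Nat.zero_le _) firstPassage_le hhit)
  · by_contra! hlt
    obtain ⟨a, ha, hga⟩ := exists_le_of_lt_firstPassage firstPassage_le hlt
    rw [h a ha.le] at hga
    exact (lt_apply_of_lt_firstPassage ha).not_ge hga

theorem apply_firstPassage_eq {d : ℤ} (h0 : m ≤ g 0) (hstep : ∀ a < n, g a - d ≤ g (a + 1))
    (hdvd : ∀ a ≤ n, d ∣ g a - m) (h : ∃ a ≤ n, g a ≤ m) : g (firstPassage n m g) = m := by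
  have hle := apply_firstPassage_le h
  have hτn : firstPassage n m g ≤ n := firstPassage_le
  rcases Nat.eq_zero_or_pos (firstPassage n m g) with hτ | hτ
  · rw [hτ] at hle ⊢
    exact le_antisymm hle h0
  · obtain ⟨k, hk⟩ := Nat.exists_eq_add_one.mpr hτ
    have hgk : m < g k := lt_apply_of_lt_firstPassage (n := n) (by omega)
    have hstepk := hstep k (by omega)
    rw [hk] at hle ⊢
    have := Int.eq_zero_of_abs_lt_dvd (hdvd (k + 1) (by omega))
      (abs_lt.mpr ⟨by linarith, by linarith⟩)
    linarith

end FirstPassage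

section Reflection

variable {n : ℕ} {m : ℤ} {P : Fin n → ℤ}

noncomputable def reflectBelow (m : ℤ) (P : Fin n → ℤ) : Fin n → ℤ :=
  splice (firstPassage n m (ht P)) P (-P)

theorem reflectBelow_involutive (m : ℤ) : Function.Involutive (reflectBelow (n := n) m) := by
  intro P
  have hτ : firstPassage n m (ht (reflectBelow m P)) = firstPassage n m (ht P) :=
    firstPassage_congr fun a ha => ht_splice_of_le _ _ ha
  rw [reflectBelow, hτ, reflectBelow, neg_splice, splice_splice_left, splice_splice_right,
    neg_neg, splice_self]

theorem reflectBelow_spec (hm : m ≤ 0) (hP : IsPath P) (hhit : ∃ a ≤ n, ht P a ≤ m) :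
    IsPath (reflectBelow m P) ∧ (∃ a ≤ n, ht (reflectBelow m P) a ≤ m) ∧
      ht (reflectBelow m P) n = 2 * m - ht P n := by
  have hτ : ht P (firstPassage n m (ht P)) = m :=
    apply_firstPassage_eq (d := 1) (by rw [ht_zero]; exact hm)
      (fun a ha => by rcases hP.ht_succ_eq ha with h | h <;> omega) (fun _ _ => one_dvd _) hhit
  refine ⟨hP.splice hP.neg _, ⟨firstPassage n m (ht P), firstPassage_le, ?_⟩, ?_⟩
  · rw [reflectBelow, ht_splice_of_le _ _ le_rfl, hτ]
  · rw [reflectBelow, ht_splice_of_ge _ _ firstPassage_le le_rfl, ht_neg, ht_neg, hτ]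
    ring

theorem card_hit_eq (hm : m ≤ 0) (x : ℤ) :
    Nat.card {P : Fin n → ℤ // IsPath P ∧ (∃ a ≤ n, ht P a ≤ m) ∧ ht P n = x} =
      Nat.card {P : Fin n → ℤ // IsPath P ∧ (∃ a ≤ n, ht P a ≤ m) ∧ ht P n = 2 * m - x} := by
  refine (reflectBelow_involutive m).card_subtype_eq ?_ ?_ <;>
  · rintro P ⟨hP, hhit, hx⟩
    obtain ⟨hP', hhit', hend⟩ := reflectBelow_spec hm hP hhit
    exact ⟨hP', hhit', by linarith⟩

end Reflection

section PathCount

variable {n : ℕ} {L x y : ℤ} {E E₁ E₂ : Set ℤ}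

def IsPathAbove (L : ℤ) (E : Set ℤ) (P : Fin n → ℤ) : Prop :=
  IsPath P ∧ (∀ a ≤ n, L ≤ ht P a) ∧ ht P n ∈ E

noncomputable def pathCount (n : ℕ) (L : ℤ) (E : Set ℤ) : ℕ :=
  Nat.card {P : Fin n → ℤ // IsPathAbove L E P}

noncomputable def endCount (n : ℕ) (x : ℤ) : ℕ :=
  Nat.card {P : Fin n → ℤ // IsPath P ∧ ht P n = x}

theorem endCount_neg (x : ℤ) : endCount n (-x) = endCount n x :=
  neg_involutive.card_subtype_eq
    (fun P ⟨hP, hx⟩ => ⟨hP.neg, by rw [ht_neg, hx, neg_neg]⟩)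
    (fun P ⟨hP, hx⟩ => ⟨hP.neg, by rw [ht_neg, hx]⟩)

theorem endCount_eq_zero (hx : n < x) : endCount n x = 0 :=
  Nat.card_eq_zero.mpr <| .inl ⟨fun ⟨P, hP, hPx⟩ => by
    have := abs_le.mp (hP.abs_ht_le le_rfl)
    omega⟩

theorem pathCount_Ici_eq_zero (hx : n < x) : pathCount n L (Ici x) = 0 :=
  Nat.card_eq_zero.mpr <| .inl ⟨fun ⟨P, hP, _, hPx⟩ => by
    have := abs_le.mp (hP.abs_ht_le le_rfl)
    simp only [mem_Ici] at hPx
    omega⟩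

theorem pathCount_singleton_of_le (hL : L ≤ -n) (x : ℤ) : pathCount n L {x} = endCount n x :=
  Nat.card_congr <| Equiv.subtypeEquivRight fun P =>
    ⟨fun ⟨hP, _, hx⟩ => ⟨hP, hx⟩, fun ⟨hP, hx⟩ => ⟨hP, fun a ha => by
      have := abs_le.mp (hP.abs_ht_le ha)
      omega, hx⟩⟩

theorem pathCount_eq_add (hE : ∀ e : ℤ, (e + n) % 2 = 0 → (e ∈ E ↔ e ∈ E₁ ∨ e ∈ E₂))
    (hdisj : Disjoint E₁ E₂) : pathCount n L E = pathCount n L E₁ + pathCount n L E₂ := by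
  have := finite_of_isPath (n := n) (p := IsPathAbove L E) fun _ h => h.1
  refine card_subtype_eq_add (fun P => ?_) fun P h₁ h₂ => disjoint_left.mp hdisj h₁.2.2 h₂.2.2
  obtain hP | hP := em (IsPath P)
  · simp only [IsPathAbove, hE _ (hP.ht_add_emod_two le_rfl)]
    tauto
  · simp [IsPathAbove, hP]

theorem pathCount_Icc_add (hy : (y + n) % 2 = 0) (hxy : x ≤ y + 2) :
    pathCount n L (Icc x y) + pathCount n L (Ici (y + 2)) = pathCount n L (Ici x) :=
  (pathCount_eq_add (fun e he => by simp only [mem_Icc, mem_Ici]; omega)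
    (disjoint_left.mpr fun e h₁ h₂ => by simp only [mem_Icc, mem_Ici] at h₁ h₂; omega)).symm

theorem pathCount_singleton_add_endCount (hL : L ≤ 1) (hx : L - 1 ≤ x) :
    pathCount n L {x} + endCount n (x + 2 - 2 * L) = endCount n x := by
  have := finite_of_isPath (n := n) (p := fun P => IsPath P ∧ ht P n = x) fun _ h => h.1
  have hsplit := card_subtype_eq_add (r := fun P : Fin n → ℤ => IsPath P ∧ ht P n = x)
    (p := IsPathAbove L {x}) (q := fun P => IsPath P ∧ (∃ a ≤ n, ht P a ≤ L - 1) ∧ ht P n = x)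
    (fun P => by
      have : (∀ a ≤ n, L ≤ ht P a) ∨ ∃ a ≤ n, ht P a ≤ L - 1 :=
        or_iff_not_imp_right.2 fun h a ha => by push Not at h; have := h a ha; omega
      simp only [IsPathAbove, mem_singleton_iff]
      tauto)
    (fun P ⟨_, hL, _⟩ ⟨_, ⟨a, ha, hle⟩, _⟩ => by have := hL a ha; omega)
  have hrefl : Nat.card {P : Fin n → ℤ // IsPath P ∧ (∃ a ≤ n, ht P a ≤ L - 1) ∧ ht P n = x}
      = endCount n (x + 2 - 2 * L) := by
    rw [card_hit_eq (by omega), ← endCount_neg]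
    exact Nat.card_congr <| Equiv.subtypeEquivRight fun P =>
      ⟨fun ⟨hP, _, hPx⟩ => ⟨hP, by rw [hPx]; ring⟩,
        fun ⟨hP, hPx⟩ => ⟨hP, ⟨n, le_rfl, by linarith⟩, by rw [hPx]; ring⟩⟩
  rw [← hrefl]
  exact hsplit.symm

theorem pathCount_Ici (w : ℕ) (hx : -(w : ℤ) - 1 ≤ x) (hpar : (x + n) % 2 = 0) :
    pathCount n (-w) (Ici x) = ∑ k ∈ Finset.range (w + 1), endCount n (x + 2 * k) := by
  suffices ∀ N : ℕ, ∀ x : ℤ, n < x + 2 * N → -(w : ℤ) - 1 ≤ x → (x + n) % 2 = 0 →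
      pathCount n (-w) (Ici x) = ∑ k ∈ Finset.range (w + 1), endCount n (x + 2 * k) from
    this (n + w + 1) x (by push_cast; omega) hx hpar
  intro N
  induction N with
  | zero =>
    intro x hxn _ _
    rw [pathCount_Ici_eq_zero (by omega)]
    exact (Finset.sum_eq_zero fun k _ => endCount_eq_zero (by omega)).symm
  | succ N ih =>
    intro x hxn hx hpar
    have hsplit :
        pathCount n (-w) (Ici x) = pathCount n (-w) {x} + pathCount n (-w) (Ici (x + 2)) :=
      pathCount_eq_add (fun e he => by simp only [mem_Ici, mem_singleton_iff]; omega)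
        (disjoint_singleton_left.mpr fun h => by simp only [mem_Ici] at h; omega)
    have hrefl := pathCount_singleton_add_endCount (n := n) (L := -w) (x := x) (by omega) (by omega)
    have hshift : ∑ k ∈ Finset.range (w + 1), endCount n (x + 2 * k) + endCount n (x + 2 - 2 * -w)
        = endCount n x + ∑ k ∈ Finset.range (w + 1), endCount n (x + 2 + 2 * k) := by
      rw [Finset.sum_range_succ (fun k : ℕ => endCount n (x + 2 + 2 * k)),
        Finset.sum_range_succ' (fun k : ℕ => endCount n (x + 2 * k))]
      have hk : ∀ k : ℕ, x + 2 * ((k + 1 : ℕ) : ℤ) = x + 2 + 2 * k := fun k => by push_cast; ring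
      simp only [hk, Nat.cast_zero, mul_zero, add_zero,
        show x + 2 - 2 * -(w : ℤ) = x + 2 + 2 * w by ring]
      ring
    rw [hsplit, ih (x + 2) (by push_cast at hxn; omega) (by omega) (by omega)]
    omega

end PathCount

section Pairs

variable {n : ℕ} {P Q : Fin n → ℤ} {x : (Fin n → ℤ) × (Fin n → ℤ)}

theorem forall_ht_le_iff (hP : IsPath P) (hQ : IsPath Q) :
    (∀ a ≤ n, ht Q a ≤ ht P a) ↔ ¬ ∃ a ≤ n, ht P a + 2 ≤ ht Q a := by
  refine ⟨fun h ⟨a, ha, hlt⟩ => by have := h a ha; omega, fun h a ha => ?_⟩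
  have := hP.ht_add_emod_two ha
  have := hQ.ht_add_emod_two ha
  by_contra hlt
  exact h ⟨a, ha, by omega⟩

noncomputable def swapTime (x : (Fin n → ℤ) × (Fin n → ℤ)) : ℕ :=
  firstPassage n (-2) fun a => ht x.1 a - ht x.2 a

noncomputable def swapTails (x : (Fin n → ℤ) × (Fin n → ℤ)) : (Fin n → ℤ) × (Fin n → ℤ) :=
  (splice (swapTime x) x.1 x.2, splice (swapTime x) x.2 x.1)

theorem swapTails_involutive : Function.Involutive (swapTails (n := n)) := by
  intro x
  have hτ : swapTime (swapTails x) = swapTime x :=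
    firstPassage_congr fun a (ha : a ≤ swapTime x) => by
      simp only [swapTails, ht_splice_of_le _ _ ha]
  calc swapTails (swapTails x)
      = (splice (swapTime x) (swapTails x).1 (swapTails x).2,
          splice (swapTime x) (swapTails x).2 (swapTails x).1) := by rw [← hτ]; rfl
    _ = x := by simp only [swapTails, splice_splice_left, splice_splice_right, splice_self]

theorem swapTails_spec {L : ℤ} {E₁ E₂ : Set ℤ} (hP : IsPathAbove (L - 2) E₁ x.1)
    (hQ : IsPathAbove L E₂ x.2) (hx : ∃ a ≤ n, ht x.1 a + 2 ≤ ht x.2 a) :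
    IsPathAbove (L - 2) {e | e + 2 ∈ E₂} (swapTails x).1 ∧
      IsPathAbove L {e | e - 2 ∈ E₁} (swapTails x).2 ∧
      ∃ a ≤ n, ht (swapTails x).1 a + 2 ≤ ht (swapTails x).2 a := by
  have hτn : swapTime x ≤ n := firstPassage_le
  have hτ : ht x.1 (swapTime x) - ht x.2 (swapTime x) = -2 :=
    apply_firstPassage_eq (g := fun a => ht x.1 a - ht x.2 a) (d := 2) (by simp [ht_zero])
      (fun a ha => by
        rcases hP.1.ht_succ_eq ha with h | h <;> rcases hQ.1.ht_succ_eq ha with h' | h' <;> omega)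
      (fun a ha => by
        have := hP.1.ht_add_emod_two ha
        have := hQ.1.ht_add_emod_two ha
        omega)
      (hx.imp fun a ⟨ha, h⟩ => ⟨ha, by omega⟩)
  have hbefore : ∀ a ≤ swapTime x,
      ht (swapTails x).1 a = ht x.1 a ∧ ht (swapTails x).2 a = ht x.2 a :=
    fun a ha => ⟨ht_splice_of_le _ _ ha, ht_splice_of_le _ _ ha⟩
  have hafter : ∀ a, swapTime x ≤ a → a ≤ n →
      ht (swapTails x).1 a = ht x.2 a - 2 ∧ ht (swapTails x).2 a = ht x.1 a + 2 := by
    intro a h₁ h₂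
    simp only [swapTails, ht_splice_of_ge _ _ h₁ h₂]
    omega
  have hfloor : ∀ a ≤ n, L - 2 ≤ ht (swapTails x).1 a ∧ L ≤ ht (swapTails x).2 a := by
    intro a ha
    have := hP.2.1 a ha
    have := hQ.2.1 a ha
    rcases le_total a (swapTime x) with h | h
    · have := hbefore a h; omega
    · have := hafter a h ha; omega
  obtain ⟨hn₁, hn₂⟩ := hafter n hτn le_rfl
  obtain ⟨hτ₁, hτ₂⟩ := hbefore _ le_rfl
  refine ⟨⟨hP.1.splice hQ.1 _, fun a ha => (hfloor a ha).1, ?_⟩,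
    ⟨hQ.1.splice hP.1 _, fun a ha => (hfloor a ha).2, ?_⟩, swapTime x, hτn, by omega⟩
  · simpa [hn₁] using hQ.2.2
  · simpa [hn₂] using hP.2.2

theorem card_isPathAbove_prod (L₁ L₂ : ℤ) (E₁ E₂ : Set ℤ) :
    Nat.card {x : (Fin n → ℤ) × (Fin n → ℤ) // IsPathAbove L₁ E₁ x.1 ∧ IsPathAbove L₂ E₂ x.2}
      = pathCount n L₁ E₁ * pathCount n L₂ E₂ := by
  rw [Nat.card_congr Equiv.subtypeProdEquivProd, Nat.card_prod]
  rfl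

/-- Lindström–Gessel–Viennot: swapping tails at the first time `Q` is two above `P` matches the
crossing pairs with the pairs whose ends are exchanged and shifted by `2`. -/
theorem card_noncrossing_add (L : ℤ) (E₁ E₂ : Set ℤ) (hE : ∀ p ∈ E₁, ∀ q ∈ E₂, q ≤ p + 2) :
    Nat.card {x : (Fin n → ℤ) × (Fin n → ℤ) // (∀ a ≤ n, ht x.2 a ≤ ht x.1 a) ∧
        IsPathAbove (L - 2) E₁ x.1 ∧ IsPathAbove L E₂ x.2}
      + pathCount n (L - 2) {e | e + 2 ∈ E₂} * pathCount n L {e | e - 2 ∈ E₁}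
      = pathCount n (L - 2) E₁ * pathCount n L E₂ := by
  have := finite_of_isPath_pair (n := n)
    (p := fun x => IsPathAbove (L - 2) E₁ x.1 ∧ IsPathAbove L E₂ x.2) fun _ h => ⟨h.1.1, h.2.1⟩
  have hsplit := card_subtype_eq_add
    (r := fun x : (Fin n → ℤ) × (Fin n → ℤ) => IsPathAbove (L - 2) E₁ x.1 ∧ IsPathAbove L E₂ x.2)
    (p := fun x => (∀ a ≤ n, ht x.2 a ≤ ht x.1 a) ∧
      IsPathAbove (L - 2) E₁ x.1 ∧ IsPathAbove L E₂ x.2)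
    (q := fun x => IsPathAbove (L - 2) E₁ x.1 ∧ IsPathAbove L E₂ x.2 ∧
      ∃ a ≤ n, ht x.1 a + 2 ≤ ht x.2 a)
    (fun x => by
      by_cases hx : ∃ a ≤ n, ht x.1 a + 2 ≤ ht x.2 a
      · exact ⟨fun h => .inr ⟨h.1, h.2, hx⟩, (·.elim (·.2) fun h => ⟨h.1, h.2.1⟩)⟩
      · exact ⟨fun h => .inl ⟨(forall_ht_le_iff h.1.1 h.2.1).2 hx, h⟩,
          (·.elim (·.2) fun h => ⟨h.1, h.2.1⟩)⟩)
    (fun x ⟨hle, hP, hQ⟩ ⟨_, _, hx⟩ => (forall_ht_le_iff hP.1 hQ.1).1 hle hx)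
  have hswap : Nat.card {x : (Fin n → ℤ) × (Fin n → ℤ) // IsPathAbove (L - 2) E₁ x.1 ∧
      IsPathAbove L E₂ x.2 ∧ ∃ a ≤ n, ht x.1 a + 2 ≤ ht x.2 a}
      = Nat.card {x : (Fin n → ℤ) × (Fin n → ℤ) // IsPathAbove (L - 2) {e | e + 2 ∈ E₂} x.1 ∧
      IsPathAbove L {e | e - 2 ∈ E₁} x.2 ∧ ∃ a ≤ n, ht x.1 a + 2 ≤ ht x.2 a} := by
    refine swapTails_involutive.card_subtype_eq (fun x ⟨hP, hQ, hx⟩ => swapTails_spec hP hQ hx)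
      fun x ⟨hP, hQ, hx⟩ => ?_
    have hE₁ : {e | e + 2 ∈ {e | e - 2 ∈ E₁}} = E₁ := by ext; simp
    have hE₂ : {e | e - 2 ∈ {e | e + 2 ∈ E₂}} = E₂ := by ext; simp
    simpa only [hE₁, hE₂] using swapTails_spec hP hQ hx
  have hcross : Nat.card {x : (Fin n → ℤ) × (Fin n → ℤ) //
      IsPathAbove (L - 2) {e | e + 2 ∈ E₂} x.1 ∧ IsPathAbove L {e | e - 2 ∈ E₁} x.2 ∧
        ∃ a ≤ n, ht x.1 a + 2 ≤ ht x.2 a}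
      = pathCount n (L - 2) {e | e + 2 ∈ E₂} * pathCount n L {e | e - 2 ∈ E₁} := by
    rw [← card_isPathAbove_prod]
    exact Nat.card_congr <| Equiv.subtypeEquivRight fun x =>
      ⟨fun ⟨hP, hQ, _⟩ => ⟨hP, hQ⟩, fun ⟨hP, hQ⟩ => ⟨hP, hQ, n, le_rfl, by
        have := hE _ hQ.2.2 _ hP.2.2
        omega⟩⟩
  rw [← card_isPathAbove_prod (L - 2) L E₁ E₂, hsplit, hswap, hcross]

end Pairs

section Agreement

variable {n : ℕ} {m u v : ℤ} {x : (Fin n → ℤ) × (Fin n → ℤ)}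

noncomputable def noncrossingCount (n : ℕ) (u v : ℤ) : ℕ :=
  Nat.card {x : (Fin n → ℤ) × (Fin n → ℤ) //
    IsPath x.1 ∧ IsPath x.2 ∧ (∀ a ≤ n, ht x.2 a ≤ ht x.1 a) ∧ ht x.1 n = u ∧ ht x.2 n = v}

theorem noncrossingCount_add (huv : v ≤ u + 2) :
    noncrossingCount n u v + endCount n (v - 2) * endCount n (u + 2)
      = endCount n u * endCount n v := by
  have hfloor : ∀ {P : Fin n → ℤ}, IsPath P → ∀ a ≤ n, -(n : ℤ) - 2 ≤ ht P a ∧ -(n : ℤ) ≤ ht P a :=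
    fun hP a ha => by have := abs_le.mp (hP.abs_ht_le ha); omega
  have hset : noncrossingCount n u v = Nat.card {x : (Fin n → ℤ) × (Fin n → ℤ) //
      (∀ a ≤ n, ht x.2 a ≤ ht x.1 a) ∧ IsPathAbove (-n - 2) {u} x.1 ∧ IsPathAbove (-n) {v} x.2} :=
    Nat.card_congr <| Equiv.subtypeEquivRight fun x =>
      ⟨fun ⟨hP, hQ, hle, hu, hv⟩ => ⟨hle, ⟨hP, fun a ha => (hfloor hP a ha).1, hu⟩,
        ⟨hQ, fun a ha => (hfloor hQ a ha).2, hv⟩⟩,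
      fun ⟨hle, ⟨hP, _, hu⟩, ⟨hQ, _, hv⟩⟩ => ⟨hP, hQ, hle, hu, hv⟩⟩
  have hE₂ : {e : ℤ | e + 2 ∈ ({v} : Set ℤ)} = {v - 2} := by ext; simp; omega
  have hE₁ : {e : ℤ | e - 2 ∈ ({u} : Set ℤ)} = {u + 2} := by ext; simp; omega
  have hlgv := card_noncrossing_add (n := n) (-n) {u} {v} (by simp only [mem_singleton_iff]; omega)
  rwa [hE₁, hE₂, ← hset, pathCount_singleton_of_le le_rfl,
    pathCount_singleton_of_le (by omega), pathCount_singleton_of_le (by omega),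
    pathCount_singleton_of_le le_rfl] at hlgv

theorem noncrossingCount_neg_swap (u v : ℤ) :
    noncrossingCount n u v = noncrossingCount n (-v) (-u) := by
  have hinv : Function.Involutive fun x : (Fin n → ℤ) × (Fin n → ℤ) => (-x.2, -x.1) :=
    fun x => by simp
  refine hinv.card_subtype_eq ?_ ?_ <;>
  · rintro x ⟨hP, hQ, hle, hu, hv⟩
    refine ⟨hQ.neg, hP.neg, fun a ha => ?_, by simp [ht_neg, hv], by simp [ht_neg, hu]⟩
    simp only [ht_neg, neg_le_neg_iff]
    exact hle a ha

noncomputable def sumTime (m : ℤ) (x : (Fin n → ℤ) × (Fin n → ℤ)) : ℕ :=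
  firstPassage n (2 * m) fun a => ht x.1 a + ht x.2 a

noncomputable def reflectSum (m : ℤ) (x : (Fin n → ℤ) × (Fin n → ℤ)) :
    (Fin n → ℤ) × (Fin n → ℤ) :=
  (splice (sumTime m x) x.1 (-x.2), splice (sumTime m x) x.2 (-x.1))

theorem reflectSum_involutive (m : ℤ) : Function.Involutive (reflectSum (n := n) m) := by
  intro x
  have hτ : sumTime m (reflectSum m x) = sumTime m x :=
    firstPassage_congr fun a (ha : a ≤ sumTime m x) => by
      simp only [reflectSum, ht_splice_of_le _ _ ha]
  calc reflectSum m (reflectSum m x)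
      = (splice (sumTime m x) (reflectSum m x).1 (-(reflectSum m x).2),
          splice (sumTime m x) (reflectSum m x).2 (-(reflectSum m x).1)) := by rw [← hτ]; rfl
    _ = x := by
      simp only [reflectSum, neg_splice, neg_neg, splice_splice_left, splice_splice_right,
        splice_self]

theorem reflectSum_spec (hm : m ≤ 0) (hP : IsPath x.1) (hQ : IsPath x.2)
    (hle : ∀ a ≤ n, ht x.2 a ≤ ht x.1 a) (hx : ∃ a ≤ n, ht x.1 a + ht x.2 a ≤ 2 * m) :
    IsPath (reflectSum m x).1 ∧ IsPath (reflectSum m x).2 ∧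
      (∀ a ≤ n, ht (reflectSum m x).2 a ≤ ht (reflectSum m x).1 a) ∧
      ht (reflectSum m x).1 n = 2 * m - ht x.2 n ∧ ht (reflectSum m x).2 n = 2 * m - ht x.1 n ∧
      ∃ a ≤ n, ht (reflectSum m x).1 a + ht (reflectSum m x).2 a ≤ 2 * m := by
  have hτn : sumTime m x ≤ n := firstPassage_le
  have hτ : ht x.1 (sumTime m x) + ht x.2 (sumTime m x) = 2 * m :=
    apply_firstPassage_eq (g := fun a => ht x.1 a + ht x.2 a) (d := 2) (by simp [ht_zero]; omega)
      (fun a ha => by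
        rcases hP.ht_succ_eq ha with h | h <;> rcases hQ.ht_succ_eq ha with h' | h' <;> omega)
      (fun a ha => by
        have := hP.ht_add_emod_two ha
        have := hQ.ht_add_emod_two ha
        omega)
      hx
  have hbefore : ∀ a ≤ sumTime m x,
      ht (reflectSum m x).1 a = ht x.1 a ∧ ht (reflectSum m x).2 a = ht x.2 a :=
    fun a ha => ⟨ht_splice_of_le _ _ ha, ht_splice_of_le _ _ ha⟩
  have hafter : ∀ a, sumTime m x ≤ a → a ≤ n →
      ht (reflectSum m x).1 a = 2 * m - ht x.2 a ∧ ht (reflectSum m x).2 a = 2 * m - ht x.1 a := by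
    intro a h₁ h₂
    simp only [reflectSum, ht_splice_of_ge _ _ h₁ h₂, ht_neg]
    omega
  obtain ⟨hn₁, hn₂⟩ := hafter n hτn le_rfl
  obtain ⟨hτ₁, hτ₂⟩ := hbefore _ le_rfl
  refine ⟨hP.splice hQ.neg _, hQ.splice hP.neg _, fun a ha => ?_, hn₁, hn₂,
    sumTime m x, hτn, by omega⟩
  have := hle a ha
  rcases le_total a (sumTime m x) with h | h
  · have := hbefore a h; omega
  · have := hafter a h ha; omega

theorem card_sum_hit_eq (hm : m ≤ 0) (huv : 2 * m ≤ u + v) :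
    Nat.card {x : (Fin n → ℤ) × (Fin n → ℤ) // IsPath x.1 ∧ IsPath x.2 ∧
        (∀ a ≤ n, ht x.2 a ≤ ht x.1 a) ∧ ht x.1 n = u ∧ ht x.2 n = v ∧
        ∃ a ≤ n, ht x.1 a + ht x.2 a ≤ 2 * m}
      = noncrossingCount n (u - 2 * m) (v - 2 * m) := by
  have hrefl : ∀ u v : ℤ, ∀ x : (Fin n → ℤ) × (Fin n → ℤ),
      (IsPath x.1 ∧ IsPath x.2 ∧ (∀ a ≤ n, ht x.2 a ≤ ht x.1 a) ∧ ht x.1 n = u ∧ ht x.2 n = v ∧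
        ∃ a ≤ n, ht x.1 a + ht x.2 a ≤ 2 * m) →
      IsPath (reflectSum m x).1 ∧ IsPath (reflectSum m x).2 ∧
        (∀ a ≤ n, ht (reflectSum m x).2 a ≤ ht (reflectSum m x).1 a) ∧
        ht (reflectSum m x).1 n = 2 * m - v ∧ ht (reflectSum m x).2 n = 2 * m - u ∧
        ∃ a ≤ n, ht (reflectSum m x).1 a + ht (reflectSum m x).2 a ≤ 2 * m :=
    fun u v x ⟨hP, hQ, hle, hu, hv, hx⟩ => by
      obtain ⟨h₁, h₂, h₃, h₄, h₅, h₆⟩ := reflectSum_spec hm hP hQ hle hx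
      exact ⟨h₁, h₂, h₃, by rw [h₄, hv], by rw [h₅, hu], h₆⟩
  rw [(reflectSum_involutive m).card_subtype_eq (hrefl u v) fun x hx => by
      simpa only [sub_sub_cancel] using hrefl (2 * m - v) (2 * m - u) x hx,
    noncrossingCount_neg_swap, neg_sub, neg_sub]
  exact Nat.card_congr <| Equiv.subtypeEquivRight fun x =>
    ⟨fun ⟨hP, hQ, hle, hu, hv, _⟩ => ⟨hP, hQ, hle, hu, hv⟩,
      fun ⟨hP, hQ, hle, hu, hv⟩ => ⟨hP, hQ, hle, hu, hv, n, le_rfl, by omega⟩⟩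

theorem agreeMin_le_iff {P Q : Fin n → ℤ} (hP : IsPath P) (hQ : IsPath Q) (m : ℤ) :
    agreeMin P Q ≤ m ↔ ∃ a ≤ n, ht P a + ht Q a ≤ 2 * m := by
  simp only [agreeMin, Finset.inf'_le_iff, Finset.mem_range, Nat.lt_succ_iff]
  refine exists_congr fun a => and_congr_right fun ha => ?_
  have := hP.ht_add_emod_two ha
  have := hQ.ht_add_emod_two ha
  omega

theorem card_agreeMin_add {μ : ℤ} (hμ : 0 ≤ μ) (huv : -(2 * μ) ≤ u + v) :
    Nat.card {x : (Fin n → ℤ) × (Fin n → ℤ) // IsPath x.1 ∧ IsPath x.2 ∧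
        (∀ a ≤ n, ht x.2 a ≤ ht x.1 a) ∧ ht x.1 n = u ∧ ht x.2 n = v ∧ agreeMin x.1 x.2 = -μ}
      + noncrossingCount n (u + 2 * μ + 2) (v + 2 * μ + 2)
      = noncrossingCount n (u + 2 * μ) (v + 2 * μ) := by
  have := finite_of_isPath_pair (n := n) (p := fun x => IsPath x.1 ∧ IsPath x.2 ∧
    (∀ a ≤ n, ht x.2 a ≤ ht x.1 a) ∧ ht x.1 n = u ∧ ht x.2 n = v ∧
    ∃ a ≤ n, ht x.1 a + ht x.2 a ≤ 2 * -μ) fun _ h => ⟨h.1, h.2.1⟩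
  have h₁ := card_sum_hit_eq (n := n) (m := -μ) (u := u) (v := v) (by omega) (by omega)
  have h₂ := card_sum_hit_eq (n := n) (m := -μ - 1) (u := u) (v := v) (by omega) (by omega)
  rw [show u - 2 * -μ = u + 2 * μ by ring, show v - 2 * -μ = v + 2 * μ by ring] at h₁
  rw [show u - 2 * (-μ - 1) = u + 2 * μ + 2 by ring,
    show v - 2 * (-μ - 1) = v + 2 * μ + 2 by ring] at h₂
  rw [← h₁, ← h₂]
  refine (card_subtype_eq_add (fun x => ⟨?_, ?_⟩) fun x h h' => ?_).symm
  · rintro ⟨hP, hQ, hle, hu, hv, hx⟩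
    rcases ((agreeMin_le_iff hP hQ _).2 hx).lt_or_eq with hlt | heq
    · exact .inr ⟨hP, hQ, hle, hu, hv, (agreeMin_le_iff hP hQ _).1 (by omega)⟩
    · exact .inl ⟨hP, hQ, hle, hu, hv, heq⟩
  · rintro (⟨hP, hQ, hle, hu, hv, heq⟩ | ⟨hP, hQ, hle, hu, hv, a, ha, hx⟩)
    · exact ⟨hP, hQ, hle, hu, hv, (agreeMin_le_iff hP hQ _).1 heq.le⟩
    · exact ⟨hP, hQ, hle, hu, hv, a, ha, by omega⟩
  · obtain ⟨hP, hQ, -, -, -, heq⟩ := h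
    have := (agreeMin_le_iff hP hQ _).2 h'.2.2.2.2.2
    omega

end Agreement

theorem card_nonneg_pairs {n : ℕ} {b t : ℤ} (hb : 0 ≤ b) (hbt : b ≤ t) (hb₂ : (b + n) % 2 = 0)
    (ht₂ : (t + n) % 2 = 0) :
    (Nat.card {x : (Fin n → ℤ) × (Fin n → ℤ) // IsPath x.1 ∧ IsPath x.2 ∧
        (∀ a ≤ n, ht x.2 a ≤ ht x.1 a) ∧ (∀ a ≤ n, 0 ≤ ht x.1 a) ∧ (∀ a ≤ n, 0 ≤ ht x.2 a) ∧
        b ≤ ht x.2 n ∧ ht x.2 n ≤ t ∧ t ≤ ht x.1 n} : ℤ)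
      = endCount n t * endCount n b + endCount n (t + 4) * endCount n b
        - endCount n (t + 2) * endCount n (b - 2) - endCount n (t + 2) * endCount n (b + 2) := by
  have hset : Nat.card {x : (Fin n → ℤ) × (Fin n → ℤ) // IsPath x.1 ∧ IsPath x.2 ∧
        (∀ a ≤ n, ht x.2 a ≤ ht x.1 a) ∧ (∀ a ≤ n, 0 ≤ ht x.1 a) ∧ (∀ a ≤ n, 0 ≤ ht x.2 a) ∧
        b ≤ ht x.2 n ∧ ht x.2 n ≤ t ∧ t ≤ ht x.1 n}
      = Nat.card {x : (Fin n → ℤ) × (Fin n → ℤ) // (∀ a ≤ n, ht x.2 a ≤ ht x.1 a) ∧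
        IsPathAbove (0 - 2) (Ici t) x.1 ∧ IsPathAbove 0 (Icc b t) x.2} :=
    Nat.card_congr <| Equiv.subtypeEquivRight fun x =>
      ⟨fun ⟨hP, hQ, hle, hP₀, hQ₀, hb, hbt, ht⟩ =>
        ⟨hle, ⟨hP, fun a ha => by have := hP₀ a ha; omega, ht⟩, ⟨hQ, hQ₀, hb, hbt⟩⟩,
      fun ⟨hle, ⟨hP, _, ht⟩, ⟨hQ, hQ₀, hb, hbt⟩⟩ =>
        ⟨hP, hQ, hle, fun a ha => (hQ₀ a ha).trans (hle a ha), hQ₀, hb, hbt, ht⟩⟩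
  have hlgv := card_noncrossing_add (n := n) 0 (Ici t) (Icc b t)
    fun p hp q hq => by simp only [mem_Ici, mem_Icc] at hp hq; omega
  have hE₂ : {e : ℤ | e + 2 ∈ Icc b t} = Icc (b - 2) (t - 2) := by ext; simp; omega
  have hE₁ : {e : ℤ | e - 2 ∈ Ici t} = Ici (t + 2) := by ext; simp; omega
  rw [hE₁, hE₂, ← hset, zero_sub] at hlgv
  have hfloor₀ : ∀ x : ℤ, -1 ≤ x → (x + n) % 2 = 0 → pathCount n 0 (Ici x) = endCount n x :=
    fun x h₁ h₂ => by simpa using pathCount_Ici (n := n) 0 (by simpa using h₁) h₂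
  have hfloor₂ : ∀ x : ℤ, -3 ≤ x → (x + n) % 2 = 0 →
      pathCount n (-2) (Ici x) = endCount n x + endCount n (x + 2) + endCount n (x + 4) :=
    fun x h₁ h₂ => by
      simpa [Finset.sum_range_succ, add_assoc] using
        pathCount_Ici (n := n) 2 (by push_cast; omega) h₂
  have h₀ := pathCount_Icc_add (n := n) (L := 0) (x := b) (y := t) ht₂ (by omega)
  have h₂ := pathCount_Icc_add (n := n) (L := -2) (x := b - 2) (y := t - 2) (by omega) (by omega)
  rw [sub_add_cancel, hfloor₂ t (by omega) ht₂, hfloor₂ (b - 2) (by omega) (by omega),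
    show b - 2 + 2 = b by ring, show b - 2 + 4 = b + 2 by ring] at h₂
  rw [hfloor₀ b (by omega) hb₂, hfloor₀ (t + 2) (by omega) (by omega)] at h₀
  rw [hfloor₂ t (by omega) ht₂, hfloor₀ (t + 2) (by omega) (by omega)] at hlgv
  apply_fun (Nat.cast : ℕ → ℤ) at hlgv h₀ h₂
  push_cast at hlgv h₀ h₂
  linear_combination hlgv
    + ((endCount n t : ℤ) + endCount n (t + 2) + endCount n (t + 4)) * h₀
    - (endCount n (t + 2) : ℤ) * h₂

theorem stmt3_general (n : ℕ) (i j : ℤ) (hj : 0 ≤ j) (hij : j ≤ i)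
    (hpar : (i + j) % 2 = (n : ℤ) % 2) :
    Nat.card {PQ : (Fin n → ℤ) × (Fin n → ℤ) //
      IsPath PQ.1 ∧ IsPath PQ.2 ∧
      (∀ a ≤ n, ht PQ.2 a ≤ ht PQ.1 a) ∧
      (∀ a ≤ n, 0 ≤ ht PQ.1 a) ∧ (∀ a ≤ n, 0 ≤ ht PQ.2 a) ∧
      i - j ≤ ht PQ.2 n ∧ ht PQ.2 n ≤ i + j ∧ i + j ≤ ht PQ.1 n} =
    Nat.card {PQ : (Fin n → ℤ) × (Fin n → ℤ) //
      IsPath PQ.1 ∧ IsPath PQ.2 ∧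
      (∀ a ≤ n, ht PQ.2 a ≤ ht PQ.1 a) ∧
      ht PQ.1 n = j + i % 2 ∧ ht PQ.2 n = -j + i % 2 ∧
      agreeMin PQ.1 PQ.2 = -(i / 2)} := by
  have hagree := card_agreeMin_add (n := n) (μ := i / 2) (u := j + i % 2) (v := -j + i % 2)
    (Int.ediv_nonneg (by omega) zero_le_two) (by omega)
  rw [show j + i % 2 + 2 * (i / 2) = i + j by omega,
    show -j + i % 2 + 2 * (i / 2) = i - j by omega] at hagree
  have hlgv₁ := noncrossingCount_add (n := n) (u := i + j) (v := i - j) (by omega)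
  have hlgv₂ := noncrossingCount_add (n := n) (u := i + j + 2) (v := i - j + 2) (by omega)
  apply Nat.cast_injective (R := ℤ)
  rw [card_nonneg_pairs (by omega) (by omega) (by omega) (by omega)]
  rw [show i + j + 2 + 2 = i + j + 4 by ring, show i - j + 2 - 2 = i - j by ring] at hlgv₂
  apply_fun (Nat.cast : ℕ → ℤ) at hagree hlgv₁ hlgv₂
  push_cast at hagree hlgv₁ hlgv₂
  linear_combination -hagree - hlgv₁ + hlgv₂

theorem stmt3 (n : ℕ) (i j : ℤ) (hj : 0 ≤ j) (hij : j ≤ i) (hn : i + j ≤ (n : ℤ))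
    (hpar : (i + j) % 2 = (n : ℤ) % 2) :
    Nat.card {PQ : (Fin n → ℤ) × (Fin n → ℤ) //
      IsPath PQ.1 ∧ IsPath PQ.2 ∧
      (∀ a ≤ n, ht PQ.2 a ≤ ht PQ.1 a) ∧
      (∀ a ≤ n, 0 ≤ ht PQ.1 a) ∧ (∀ a ≤ n, 0 ≤ ht PQ.2 a) ∧
      i - j ≤ ht PQ.2 n ∧ ht PQ.2 n ≤ i + j ∧ i + j ≤ ht PQ.1 n} =
    Nat.card {PQ : (Fin n → ℤ) × (Fin n → ℤ) //
      IsPath PQ.1 ∧ IsPath PQ.2 ∧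
      (∀ a ≤ n, ht PQ.2 a ≤ ht PQ.1 a) ∧
      ht PQ.1 n = j + i % 2 ∧ ht PQ.2 n = -j + i % 2 ∧
      agreeMin PQ.1 PQ.2 = -(i / 2)} :=
  stmt3_general n i j hj hij hpar
end

section
/- Let n, i, j be integers with i ≥ j ≥ 0, i + j ≤ n and i + j ≡ n (mod 2). Then the number of pairs (P,Q) of lattice paths of length n satisfying −P ≤ Q ≤ P, h(P) = i + j and h(Q) = i − j equals the number of walks of length n constrained to the first quadrant (all positions (x,y) satisfy x ≥ 0 and y ≥ 0) that end at the point (i, j). -/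
/-- A walk of length `n` with unit steps N, S, E, W. -/
def IsWalk {n : ℕ} (w : Fin n → ℤ × ℤ) : Prop :=
  ∀ l, w l = (0, 1) ∨ w l = (0, -1) ∨ w l = (1, 0) ∨ w l = (-1, 0)

/-- Position of the walk `w` after `a` steps. -/
def pos {n : ℕ} (w : Fin n → ℤ × ℤ) (a : ℕ) : ℤ × ℤ :=
  ∑ l ∈ Finset.univ.filter (fun l : Fin n => (l : ℕ) < a), w l

private lemma pos_fst {n : ℕ} (w : Fin n → ℤ × ℤ) (a : ℕ) :
    (pos w a).1 = ∑ l ∈ Finset.univ.filter (fun l : Fin n => (l : ℕ) < a), (w l).1 := by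
  simp [pos, Prod.fst_sum]

private lemma pos_snd {n : ℕ} (w : Fin n → ℤ × ℤ) (a : ℕ) :
    (pos w a).2 = ∑ l ∈ Finset.univ.filter (fun l : Fin n => (l : ℕ) < a), (w l).2 := by
  simp [pos, Prod.snd_sum]

private lemma fwd_fst {n : ℕ} (P Q : Fin n → ℤ) (hP : ∀ l, P l = 1 ∨ P l = -1)
    (hQ : ∀ l, Q l = 1 ∨ Q l = -1) (a : ℕ) :
    2 * (pos (fun l => ((P l + Q l) / 2, (P l - Q l) / 2)) a).1 = ht P a + ht Q a := by
  rw [pos_fst, ht, ht, Finset.mul_sum, ← Finset.sum_add_distrib]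
  refine Finset.sum_congr rfl fun l _ => ?_
  rcases hP l with h1 | h1 <;> rcases hQ l with h2 | h2 <;> rw [h1, h2] <;> norm_num

private lemma fwd_snd {n : ℕ} (P Q : Fin n → ℤ) (hP : ∀ l, P l = 1 ∨ P l = -1)
    (hQ : ∀ l, Q l = 1 ∨ Q l = -1) (a : ℕ) :
    2 * (pos (fun l => ((P l + Q l) / 2, (P l - Q l) / 2)) a).2 = ht P a - ht Q a := by
  rw [pos_snd, ht, ht, Finset.mul_sum, ← Finset.sum_sub_distrib]
  refine Finset.sum_congr rfl fun l _ => ?_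
  rcases hP l with h1 | h1 <;> rcases hQ l with h2 | h2 <;> rw [h1, h2] <;> norm_num

private lemma bwd_P {n : ℕ} (w : Fin n → ℤ × ℤ) (a : ℕ) :
    ht (fun l => (w l).1 + (w l).2) a = (pos w a).1 + (pos w a).2 := by
  rw [ht, pos_fst, pos_snd, ← Finset.sum_add_distrib]

private lemma bwd_Q {n : ℕ} (w : Fin n → ℤ × ℤ) (a : ℕ) :
    ht (fun l => (w l).1 - (w l).2) a = (pos w a).1 - (pos w a).2 := by
  rw [ht, pos_fst, pos_snd, ← Finset.sum_sub_distrib]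

theorem stmt8 (n : ℕ) (i j : ℤ) (hj : 0 ≤ j) (hij : j ≤ i) (hn : i + j ≤ (n : ℤ))
    (hpar : (i + j) % 2 = (n : ℤ) % 2) :
    Nat.card {PQ : (Fin n → ℤ) × (Fin n → ℤ) //
      IsPath PQ.1 ∧ IsPath PQ.2 ∧
      (∀ a ≤ n, -ht PQ.1 a ≤ ht PQ.2 a ∧ ht PQ.2 a ≤ ht PQ.1 a) ∧
      ht PQ.1 n = i + j ∧ ht PQ.2 n = i - j} =
    Nat.card {w : Fin n → ℤ × ℤ //
      IsWalk w ∧ (∀ a ≤ n, 0 ≤ (pos w a).1 ∧ 0 ≤ (pos w a).2) ∧ pos w n = (i, j)} := by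
  refine Nat.card_congr ?_
  refine
    { toFun := fun ⟨⟨P, Q⟩, hP, hQ, hord, hPn, hQn⟩ =>
        ⟨fun l => ((P l + Q l) / 2, (P l - Q l) / 2), ?_, ?_, ?_⟩
      invFun := fun ⟨w, hw, hquad, hwn⟩ =>
        ⟨(fun l => (w l).1 + (w l).2, fun l => (w l).1 - (w l).2), ?_, ?_, ?_, ?_, ?_⟩
      left_inv := ?_
      right_inv := ?_ }
  · -- IsWalk of image
    intro l
    have h1 : P l = 1 ∨ P l = -1 := hP l
    have h2 : Q l = 1 ∨ Q l = -1 := hQ l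
    rcases h1 with h1 | h1 <;> rcases h2 with h2 | h2 <;>
      simp [h1, h2, Prod.ext_iff]
  · -- quadrant condition
    intro a ha
    have h1 := fwd_fst P Q hP hQ a
    have h2 := fwd_snd P Q hP hQ a
    have h3 : -ht P a ≤ ht Q a ∧ ht Q a ≤ ht P a := hord a ha
    omega
  · -- endpoint
    have h1 := fwd_fst P Q hP hQ n
    have h2 := fwd_snd P Q hP hQ n
    have h3 : ht P n = i + j := hPn
    have h4 : ht Q n = i - j := hQn
    rw [Prod.ext_iff]
    constructor <;> omega
  · -- IsPath of first component
    intro l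
    show (w l).1 + (w l).2 = 1 ∨ (w l).1 + (w l).2 = -1
    rcases hw l with h | h | h | h <;> rw [h] <;> norm_num
  · -- IsPath of second component
    intro l
    show (w l).1 - (w l).2 = 1 ∨ (w l).1 - (w l).2 = -1
    rcases hw l with h | h | h | h <;> rw [h] <;> norm_num
  · -- ordering condition
    intro a ha
    have h1 := bwd_P w a
    have h2 := bwd_Q w a
    have h3 := hquad a ha
    constructor
    · show -ht (fun l => (w l).1 + (w l).2) a ≤ ht (fun l => (w l).1 - (w l).2) a
      omega
    · show ht (fun l => (w l).1 - (w l).2) a ≤ ht (fun l => (w l).1 + (w l).2) a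
      omega
  · -- endpoint P
    have h1 := bwd_P w n
    rw [hwn] at h1
    show ht (fun l => (w l).1 + (w l).2) n = i + j
    omega
  · -- endpoint Q
    have h2 := bwd_Q w n
    rw [hwn] at h2
    show ht (fun l => (w l).1 - (w l).2) n = i - j
    omega
  · -- left inverse
    rintro ⟨⟨P, Q⟩, hP, hQ, hord, hPn, hQn⟩
    refine Subtype.ext ?_
    refine Prod.ext ?_ ?_ <;> funext l <;>
      · have h1 : P l = 1 ∨ P l = -1 := hP l
        have h2 : Q l = 1 ∨ Q l = -1 := hQ l
        show _ = _
        rcases h1 with h1 | h1 <;> rcases h2 with h2 | h2 <;> simp [h1, h2]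
  · -- right inverse
    rintro ⟨w, hw, hquad, hwn⟩
    refine Subtype.ext ?_
    funext l
    show ((((w l).1 + (w l).2) + ((w l).1 - (w l).2)) / 2,
          (((w l).1 + (w l).2) - ((w l).1 - (w l).2)) / 2) = w l
    rcases hw l with h | h | h | h <;> rw [h] <;> simp
end

section
/- For every m ≥ 0, the number of walks of length 2m constrained to the first octant (all positions (x,y) satisfy x ≥ y ≥ 0) that end on the diagonal y = x equals C_m · C_{m+1}, where C_m denotes the m-th Catalan number. -/
open Finset

section Counting

variable {n : ℕ}

theorem pos_of_le (w : Fin n → ℤ × ℤ) {a : ℕ} (h : n ≤ a) : pos w a = ∑ l, w l := by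
  rw [pos, filter_true_of_mem fun l _ => l.isLt.trans_le h]

theorem pos_snoc (f : Fin n → ℤ × ℤ) (s : ℤ × ℤ) (a : ℕ) :
    pos (Fin.snoc f s : Fin (n + 1) → ℤ × ℤ) a = pos f a + if n < a then s else 0 := by
  simp only [pos, sum_filter, Fin.sum_univ_castSucc, Fin.snoc_castSucc, Fin.snoc_last,
    Fin.val_castSucc, Fin.val_last]

theorem pos_snoc_of_le (f : Fin n → ℤ × ℤ) (s : ℤ × ℤ) {a : ℕ} (ha : a ≤ n) :
    pos (Fin.snoc f s : Fin (n + 1) → ℤ × ℤ) a = pos f a := by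
  rw [pos_snoc, if_neg ha.not_gt, add_zero]

theorem pos_snoc_succ (f : Fin n → ℤ × ℤ) (s : ℤ × ℤ) :
    pos (Fin.snoc f s : Fin (n + 1) → ℤ × ℤ) (n + 1) = pos f n + s := by
  rw [pos_snoc, if_pos n.lt_succ_self, pos_of_le f le_rfl, pos_of_le f n.le_succ]

variable (S : Finset (ℤ × ℤ)) (R : Set (ℤ × ℤ)) [DecidablePred (· ∈ R)]

def confinedWalks (n : ℕ) : Finset (Fin n → ℤ × ℤ) :=
  {w ∈ Fintype.piFinset fun _ => S | ∀ a ≤ n, pos w a ∈ R}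

def walkCount : ℕ → ℤ × ℤ → ℕ
  | 0, p => if p = 0 ∧ p ∈ R then 1 else 0
  | n + 1, p => if p ∈ R then ∑ s ∈ S, walkCount n (p - s) else 0

theorem walkCount_of_notMem {p : ℤ × ℤ} (hp : p ∉ R) : ∀ n, walkCount S R n p = 0
  | 0 => if_neg fun h => hp h.2
  | _ + 1 => if_neg hp

variable {S R}

theorem mem_confinedWalks {w : Fin n → ℤ × ℤ} :
    w ∈ confinedWalks S R n ↔ (∀ l, w l ∈ S) ∧ ∀ a ≤ n, pos w a ∈ R := by
  simp [confinedWalks]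

theorem snoc_mem_confinedWalks {f : Fin n → ℤ × ℤ} {s : ℤ × ℤ} :
    (Fin.snoc f s : Fin (n + 1) → ℤ × ℤ) ∈ confinedWalks S R (n + 1) ↔
      f ∈ confinedWalks S R n ∧ s ∈ S ∧ pos f n + s ∈ R := by
  simp only [confinedWalks, mem_filter, Fintype.mem_piFinset, Fin.forall_fin_succ',
    Fin.snoc_castSucc, Fin.snoc_last]
  constructor
  · rintro ⟨⟨hf, hs⟩, hR⟩
    exact ⟨⟨hf, fun a ha => pos_snoc_of_le f s ha ▸ hR a (ha.trans n.le_succ)⟩, hs,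
      pos_snoc_succ f s ▸ hR _ le_rfl⟩
  · rintro ⟨⟨hf, hR⟩, hs, hend⟩
    refine ⟨⟨hf, hs⟩, fun a ha => ?_⟩
    rcases ha.lt_or_eq with ha | rfl
    · exact pos_snoc_of_le f s (Nat.lt_succ_iff.mp ha) ▸ hR a (Nat.lt_succ_iff.mp ha)
    · exact pos_snoc_succ f s ▸ hend

theorem card_confinedWalks_succ (n : ℕ) (p : ℤ × ℤ) :
    #{w ∈ confinedWalks S R (n + 1) | pos w (n + 1) = p} =
      if p ∈ R then ∑ s ∈ S, #{f ∈ confinedWalks S R n | pos f n = p - s} else 0 := by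
  split_ifs with hp
  · rw [card_eq_sum_card_fiberwise (f := fun w => w (Fin.last n)) (t := S) fun w hw =>
      (mem_confinedWalks.mp (mem_filter.mp hw).1).1 _]
    refine sum_congr rfl fun s hs => card_nbij' Fin.init (fun f => Fin.snoc f s) ?_ ?_ ?_ ?_
    · intro w hw
      obtain ⟨f, t, rfl⟩ : ∃ f t, w = Fin.snoc f t := ⟨_, _, (Fin.snoc_init_self w).symm⟩
      simp only [mem_coe, mem_filter, snoc_mem_confinedWalks, pos_snoc_succ,
        Fin.snoc_last, Fin.init_snoc] at hw ⊢
      obtain ⟨⟨⟨hf, -⟩, rfl⟩, rfl⟩ := hw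
      exact ⟨hf, by abel⟩
    · intro f hf
      simp only [mem_coe, mem_filter, snoc_mem_confinedWalks, pos_snoc_succ,
        Fin.snoc_last] at hf ⊢
      obtain ⟨hf, hend⟩ := hf
      simpa [hend] using ⟨hf, hs, hp⟩
    · intro w hw
      simp only [mem_coe, mem_filter] at hw
      exact hw.2 ▸ Fin.snoc_init_self w
    · intro f _
      exact Fin.init_snoc _ _
  · refine card_eq_zero.mpr (filter_eq_empty_iff.mpr fun w hw hend => hp ?_)
    exact hend ▸ (mem_confinedWalks.mp hw).2 _ le_rfl

theorem card_confinedWalks_eq_walkCount (n : ℕ) (p : ℤ × ℤ) :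
    #{w ∈ confinedWalks S R n | pos w n = p} = walkCount S R n p := by
  induction n generalizing p with
  | zero =>
    by_cases hp : p = 0 <;> by_cases h0 : (0 : ℤ × ℤ) ∈ R <;>
      simp [walkCount, confinedWalks, pos, eq_comm, hp, h0]
  | succ n ih => simp only [card_confinedWalks_succ, walkCount, ih]

end Counting

def simpleWalkCount : ℕ → ℤ → ℕ
  | 0, d => if d = 0 then 1 else 0
  | n + 1, d => simpleWalkCount n (d - 1) + simpleWalkCount n (d + 1)

theorem simpleWalkCount_neg (n : ℕ) (d : ℤ) : simpleWalkCount n (-d) = simpleWalkCount n d := by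
  induction n generalizing d with
  | zero => simp [simpleWalkCount]
  | succ n ih =>
    rw [simpleWalkCount, simpleWalkCount, show -d - 1 = -(d + 1) by ring,
      show -d + 1 = -(d - 1) by ring, ih, ih, add_comm]

theorem simpleWalkCount_of_lt (n : ℕ) {d : ℤ} (h : d + n < 0) : simpleWalkCount n d = 0 := by
  induction n generalizing d with
  | zero => simp only [simpleWalkCount]; rw [if_neg (by omega)]
  | succ n ih =>
    rw [simpleWalkCount, ih (by push_cast at h; omega), ih (by push_cast at h; omega)]

theorem simpleWalkCount_two_mul_sub (n k : ℕ) : simpleWalkCount n (2 * k - n) = n.choose k := by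
  induction n generalizing k with
  | zero => cases k <;> simp [simpleWalkCount]; omega
  | succ n ih =>
    rw [simpleWalkCount]
    cases k with
    | zero =>
      rw [simpleWalkCount_of_lt n (by push_cast; omega), zero_add,
        show 2 * ((0 : ℕ) : ℤ) - (n + 1 : ℕ) + 1 = 2 * (0 : ℕ) - n by push_cast; ring, ih,
        Nat.choose_zero_right, Nat.choose_zero_right]
    | succ k =>
      rw [show 2 * ((k + 1 : ℕ) : ℤ) - (n + 1 : ℕ) - 1 = 2 * k - n by push_cast; ring,
        show 2 * ((k + 1 : ℕ) : ℤ) - (n + 1 : ℕ) + 1 = 2 * (k + 1 : ℕ) - n by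
          push_cast; ring,
        ih, ih, Nat.choose_succ_succ]

-- By the reflection principle, the number of ±1 walks of length `n` from `c` to `d` avoiding `0`.
def ballot (n : ℕ) (c d : ℤ) : ℤ := simpleWalkCount n (d - c) - simpleWalkCount n (d + c)

theorem ballot_succ (n : ℕ) (c d : ℤ) :
    ballot (n + 1) c d = ballot n c (d - 1) + ballot n c (d + 1) := by
  simp only [ballot, simpleWalkCount, Nat.cast_add]
  rw [sub_right_comm d 1 c, sub_add_eq_add_sub d 1 c, add_sub_right_comm d 1 c,
    add_right_comm d 1 c]
  ring

theorem ballot_zero_right (n : ℕ) (c : ℤ) : ballot n c 0 = 0 := by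
  rw [ballot, zero_sub, zero_add, simpleWalkCount_neg, sub_self]

-- Karlin–McGregor determinant for two walks started at `1` and `3` avoiding `0` and each other.
def chamberDet (n : ℕ) (u v : ℤ) : ℤ :=
  ballot n 1 u * ballot n 3 v - ballot n 3 u * ballot n 1 v

theorem chamberDet_succ (n : ℕ) (u v : ℤ) :
    chamberDet (n + 1) u v = chamberDet n (u + 1) (v - 1) + chamberDet n (u - 1) (v + 1) +
      chamberDet n (u - 1) (v - 1) + chamberDet n (u + 1) (v + 1) := by
  simp only [chamberDet, ballot_succ]
  ring

theorem chamberDet_zero_left (n : ℕ) (v : ℤ) : chamberDet n 0 v = 0 := by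
  simp [chamberDet, ballot_zero_right]

theorem chamberDet_self (n : ℕ) (u : ℤ) : chamberDet n u u = 0 := by
  rw [chamberDet, mul_comm, sub_self]

theorem chamberDet_zero {u v : ℤ} (hu : 1 ≤ u) (huv : u + 2 ≤ v) :
    chamberDet 0 u v = if u = 1 ∧ v = 3 then 1 else 0 := by
  simp only [chamberDet, ballot, simpleWalkCount]
  split_ifs <;> omega

def nsew : Finset (ℤ × ℤ) := {(0, 1), (0, -1), (1, 0), (-1, 0)}

def octant : Set (ℤ × ℤ) := {p | p.2 ≤ p.1 ∧ 0 ≤ p.2}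

instance : DecidablePred (· ∈ octant) := fun p =>
  inferInstanceAs (Decidable (p.2 ≤ p.1 ∧ 0 ≤ p.2))

theorem sum_nsew {M : Type*} [AddCommMonoid M] (f : ℤ × ℤ → M) :
    ∑ s ∈ nsew, f s = f (0, 1) + f (0, -1) + f (1, 0) + f (-1, 0) := by
  simp [nsew, add_assoc]

def octantDet (n : ℕ) (p : ℤ × ℤ) : ℤ := chamberDet n (p.1 - p.2 + 1) (p.1 + p.2 + 3)

theorem octantDet_succ (n : ℕ) (p : ℤ × ℤ) :
    octantDet (n + 1) p = ∑ s ∈ nsew, octantDet n (p - s) := by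
  simp only [sum_nsew, octantDet, chamberDet_succ, Prod.fst_sub, Prod.snd_sub]
  ring_nf

theorem octantDet_of_notMem {n : ℕ} {p : ℤ × ℤ} (h₁ : p.2 ≤ p.1 + 1) (h₂ : -1 ≤ p.2)
    (hp : p ∉ octant) : octantDet n p = 0 := by
  simp only [octant, Set.mem_ofPred_eq, not_and_or, not_le] at hp
  obtain h | h : p.1 = p.2 - 1 ∨ p.2 = -1 := by omega
  · rw [octantDet, h, show p.2 - 1 - p.2 + 1 = 0 by ring, chamberDet_zero_left]
  · rw [octantDet, h, show p.1 - -1 + 1 = p.1 + -1 + 3 by ring, chamberDet_self]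

theorem walkCount_nsew_octant (n : ℕ) {p : ℤ × ℤ} (hp : p ∈ octant) :
    (walkCount nsew octant n p : ℤ) = octantDet n p := by
  induction n generalizing p with
  | zero =>
    obtain ⟨h₁, h₂⟩ := id hp
    rw [walkCount, octantDet, chamberDet_zero (by omega) (by omega), Nat.cast_ite, Nat.cast_one,
      Nat.cast_zero]
    refine if_congr ⟨fun h => by rw [h.1]; simp, fun h => ⟨?_, hp⟩⟩ rfl rfl
    exact Prod.ext (by simp; omega) (by simp; omega)
  | succ n ih =>
    rw [walkCount, if_pos hp, octantDet_succ, Nat.cast_sum]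
    refine sum_congr rfl fun s hs => ?_
    by_cases hq : p - s ∈ octant
    · exact ih hq
    · obtain ⟨h₁, h₂⟩ := hp
      have : s.1 - s.2 ≤ 1 ∧ s.2 ≤ 1 := by
        simp only [nsew, mem_insert, mem_singleton] at hs
        rcases hs with rfl | rfl | rfl | rfl <;> norm_num
      rw [walkCount_of_notMem _ _ hq, Nat.cast_zero,
        octantDet_of_notMem (by simp only [Prod.fst_sub, Prod.snd_sub]; omega)
          (by simp only [Prod.snd_sub]; omega) hq]

theorem pos_fst_add_snd_le {n : ℕ} {w : Fin n → ℤ × ℤ} (hw : ∀ l, w l ∈ nsew) :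
    (pos w n).1 + (pos w n).2 ≤ n := by
  rw [pos_of_le w le_rfl, Prod.fst_sum, Prod.snd_sum, ← sum_add_distrib]
  calc ∑ l, ((w l).1 + (w l).2) ≤ ∑ _l : Fin n, (1 : ℤ) := sum_le_sum fun l _ => by
        have hl := hw l
        simp only [nsew, mem_insert, mem_singleton] at hl
        rcases hl with h | h | h | h <;> simp [h]
    _ = n := by simp

theorem card_octant_diagonal_eq_sum (m : ℕ) :
    #{w ∈ confinedWalks nsew octant (2 * m) | (pos w (2 * m)).2 = (pos w (2 * m)).1} =
      ∑ k ∈ range (m + 1),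
        #{w ∈ confinedWalks nsew octant (2 * m) | pos w (2 * m) = ((k : ℤ), (k : ℤ))} := by
  rw [card_eq_sum_card_fiberwise (f := fun w => (pos w (2 * m)).1.toNat)
    (t := range (m + 1)) fun w hw => by
    obtain ⟨hw, hdiag⟩ := mem_filter.mp hw
    have := pos_fst_add_snd_le (mem_confinedWalks.mp hw).1
    simp only [coe_range, Set.mem_Iio]
    omega]
  refine sum_congr rfl fun k _ => ?_
  rw [filter_filter]
  refine congrArg card (filter_congr fun w hw => ?_)
  have h0 := ((mem_confinedWalks.mp hw).2 _ le_rfl).2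
  simp only [Prod.ext_iff]
  omega

theorem sum_range_sub_shift {M : Type*} [AddCommGroup M] (f : ℕ → M) (c K : ℕ) :
    ∑ k ∈ range K, (f k - f (k + c)) = ∑ j ∈ range c, (f j - f (K + j)) := by
  have h := sum_range_add f K c
  rw [add_comm K c, sum_range_add] at h
  simp only [sum_sub_distrib, add_comm _ c]
  rw [← sub_eq_sub_iff_add_eq_add.mpr h]

theorem catalan_mul_catalan_succ_eq_choose (m : ℕ) :
    (catalan m * catalan (m + 1) : ℤ) = (2 * m).choose m ^ 2 +
      (2 * m).choose m * (2 * m).choose (m + 2) - 2 * (2 * m).choose (m + 1) ^ 2 := by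
  have hC₀ : (catalan m : ℚ) * (m + 1) = (2 * m).choose m := by
    rw [mul_comm, ← Nat.centralBinom_eq_two_mul_choose, ← succ_mul_catalan_eq_centralBinom]
    push_cast; ring
  have hC₁ :
      (catalan (m + 1) : ℚ) * ((m + 1) * (m + 2)) = 2 * (2 * m + 1) * (2 * m).choose m := by
    have h := Nat.succ_mul_centralBinom_succ m
    rw [← succ_mul_catalan_eq_centralBinom, Nat.centralBinom_eq_two_mul_choose] at h
    qify at h
    linear_combination h
  have hB₁ : ((2 * m).choose (m + 1) : ℚ) * (m + 1) = (2 * m).choose m * m := by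
    have h := Nat.choose_succ_right_eq (2 * m) m
    rw [show 2 * m - m = m by omega] at h
    exact_mod_cast h
  have hB₂ : ((2 * m).choose (m + 2) : ℚ) * (m + 2) = (2 * m).choose (m + 1) * (m - 1) := by
    rcases Nat.eq_zero_or_pos m with rfl | hm
    · simp
    have h := Nat.choose_succ_right_eq (2 * m) (m + 1)
    qify [show m + 1 ≤ 2 * m by omega] at h
    linear_combination h
  qify
  rw [eq_div_of_mul_eq (by positivity) hC₀, eq_div_of_mul_eq (by positivity) hC₁,
    eq_div_of_mul_eq (by positivity) hB₂, eq_div_of_mul_eq (by positivity) hB₁]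
  field_simp
  ring

theorem sum_octantDet_diagonal (m : ℕ) :
    ∑ k ∈ range (m + 1), octantDet (2 * m) ((k : ℤ), (k : ℤ)) =
      catalan m * catalan (m + 1) := by
  set B : ℕ → ℤ := fun j => (2 * m).choose (m + j) with hB
  have hwalk (j : ℕ) (d : ℤ) (hd : d = 2 * j ∨ d = -(2 * j)) :
      (simpleWalkCount (2 * m) d : ℤ) = B j := by
    have h := simpleWalkCount_two_mul_sub (2 * m) (m + j)
    rw [show 2 * ((m + j : ℕ) : ℤ) - (2 * m : ℕ) = 2 * j by push_cast; ring] at h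
    rcases hd with rfl | rfl
    · rw [h]
    · rw [simpleWalkCount_neg, h]
  have hterm (k : ℕ) : octantDet (2 * m) ((k : ℤ), (k : ℤ)) =
      (B 0 - B 1) * (B k - B (k + 3)) - (B 1 - B 2) * (B (k + 1) - B (k + 2)) := by
    simp only [octantDet, chamberDet, ballot]
    rw [hwalk 0 (k - k + 1 - 1) (by left; ring), hwalk 1 (k - k + 1 + 1) (by left; ring),
      hwalk 1 (k - k + 1 - 3) (by right; ring), hwalk 2 (k - k + 1 + 3) (by left; ring),
      hwalk k (k + k + 3 - 3) (by left; ring),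
      hwalk (k + 3) (k + k + 3 + 3) (by left; push_cast; ring),
      hwalk (k + 1) (k + k + 3 - 1) (by left; push_cast; ring),
      hwalk (k + 2) (k + k + 3 + 1) (by left; push_cast; ring)]
  have hvanish (j : ℕ) : B (m + 1 + j) = 0 := by
    simp only [hB, Nat.cast_eq_zero]
    exact Nat.choose_eq_zero_of_lt (by omega)
  rw [sum_congr rfl fun k _ => hterm k, sum_sub_distrib, ← mul_sum, ← mul_sum,
    sum_range_sub_shift B 3, sum_range_sub_shift (fun j => B (j + 1)) 1]
  simp only [sum_range_succ, sum_range_zero, hvanish]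
  rw [catalan_mul_catalan_succ_eq_choose]
  simp only [hB, add_zero, zero_add]
  ring

theorem stmt13 (m : ℕ) :
    Nat.card {w : Fin (2 * m) → ℤ × ℤ //
      IsWalk w ∧ (∀ a ≤ 2 * m, (pos w a).2 ≤ (pos w a).1 ∧ 0 ≤ (pos w a).2) ∧ (pos w (2 * m)).2 = (pos w (2 * m)).1} =
      catalan m * catalan (m + 1) := by
  have hwalks : ∀ w : Fin (2 * m) → ℤ × ℤ, (IsWalk w ∧
      (∀ a ≤ 2 * m, (pos w a).2 ≤ (pos w a).1 ∧ 0 ≤ (pos w a).2) ∧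
        (pos w (2 * m)).2 = (pos w (2 * m)).1) ↔
      w ∈ {w ∈ confinedWalks nsew octant (2 * m) | (pos w (2 * m)).2 = (pos w (2 * m)).1} := by
    intro w
    rw [mem_filter, mem_confinedWalks]
    simp [IsWalk, nsew, octant, and_assoc]
  rw [Nat.card_congr (Equiv.subtypeEquivRight hwalks), Nat.card_eq_finsetCard,
    card_octant_diagonal_eq_sum, ← Nat.cast_inj (R := ℤ), Nat.cast_sum, Nat.cast_mul,
    ← sum_octantDet_diagonal]
  refine sum_congr rfl fun k _ => ?_
  rw [card_confinedWalks_eq_walkCount, walkCount_nsew_octant]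
  exact ⟨le_rfl, Nat.cast_nonneg k⟩
end
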